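/- arXiv:2308.01131 — 3 statements merged into one kernel-verified Lean document; each statement's English description precedes it below -/
import Mathlib

section
/- Let n, m, k be natural numbers and let F : ℝⁿ × ℝᵐ → ℝᵏ (formally, F : (Fin n → ℝ) × (Fin m → ℝ) → (Fin k → ℝ)) be infinitely differentiable (ContDiff ℝ ⊤). Then the following are equivalent: (i) for all x ∈ ℝⁿ and y ∈ ℝᵐ, fderiv ℝ F (x, 0) (0, y) = F (x, y); (ii) for every x ∈ ℝⁿ, the map y ↦ F (x, y) is ℝ-linear. That is, a smooth map between Euclidean spaces is linear in its second argument in the Cartesian differential sense if and only if it is ℝ-linear in its second argument. -/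
/-- A smooth map between Euclidean spaces is linear in its second argument in the
Cartesian differential sense iff it is `ℝ`-linear in its second argument. -/
theorem stmt0 (n m k : ℕ) (F : (Fin n → ℝ) × (Fin m → ℝ) → (Fin k → ℝ))
    (hF : ContDiff ℝ (⊤ : ℕ∞) F) :
    (∀ (x : Fin n → ℝ) (y : Fin m → ℝ), fderiv ℝ F (x, 0) (0, y) = F (x, y)) ↔
      (∀ x : Fin n → ℝ, IsLinearMap ℝ (fun y : Fin m → ℝ => F (x, y))) := by
  constructor
  · intro H x
    constructor
    · intro y z
      simp only [← H]
      have he : ((0 : Fin n → ℝ), y + z) = ((0 : Fin n → ℝ), y) + (0, z) := by simp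
      rw [he, map_add]
    · intro c y
      simp only [← H]
      have he : ((0 : Fin n → ℝ), c • y) = c • ((0 : Fin n → ℝ), y) := by simp
      rw [he, map_smul]
  · intro H x y
    have hd : HasFDerivAt F (fderiv ℝ F (x, 0)) (x, 0) :=
      (hF.differentiable (by simp) (x, 0)).hasFDerivAt
    have hγ : HasDerivAt (fun t : ℝ => ((x, t • y) : (Fin n → ℝ) × (Fin m → ℝ)))
        ((0 : Fin n → ℝ), y) 0 := by
      have h1 : HasDerivAt (fun t : ℝ => t • y) ((1:ℝ) • y) 0 :=
        (hasDerivAt_id 0).smul_const y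
      simpa using HasDerivAt.prodMk (hasDerivAt_const (0:ℝ) x) h1
    have hcomp : HasDerivAt (fun t : ℝ => F (x, t • y)) (fderiv ℝ F (x, 0) (0, y)) 0 := by
      have hd' : HasFDerivAt F (fderiv ℝ F (x, 0)) (x, (0:ℝ) • y) := by simpa using hd
      simpa [Function.comp_def] using hd'.comp_hasDerivAt (0:ℝ) hγ
    have h2 : HasDerivAt (fun t : ℝ => t • F (x, y)) (F (x, y)) 0 := by
      simpa using (hasDerivAt_id (0:ℝ)).smul_const (F (x, y))
    have heq : (fun t : ℝ => F (x, t • y)) = fun t : ℝ => t • F (x, y) := by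
      funext t
      exact (H x).map_smul t y
    rw [heq] at hcomp
    exact hcomp.unique h2
end

section
/- Let M and N be smooth manifolds without boundary modelled on finite-dimensional real normed spaces via models with corners I and J respectively, and let f : M → N be smooth (ContMDiff I J ⊤ f). Let ω be a smooth covector field on N. Then the pullback f*ω, defined pointwise by (f*ω) x = (ω (f x)).comp (mfderiv I J f x) : TangentSpace I x →L[ℝ] ℝ, is a smooth covector field on M. -/
open Manifold Bundle

/-- The pullback of a smooth covector field along a smooth map between smooth
manifolds is a smooth covector field. -/
theorem stmt3
    {E : Type*} [NormedAddCommGroup E] [NormedSpace ℝ E] [FiniteDimensional ℝ E]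
    {H : Type*} [TopologicalSpace H] {I : ModelWithCorners ℝ E H} [I.Boundaryless]
    {M : Type*} [TopologicalSpace M] [ChartedSpace H M] [IsManifold I ((⊤ : ℕ∞) : WithTop ℕ∞) M]
    {E' : Type*} [NormedAddCommGroup E'] [NormedSpace ℝ E'] [FiniteDimensional ℝ E']
    {H' : Type*} [TopologicalSpace H'] {J : ModelWithCorners ℝ E' H'} [J.Boundaryless]
    {N : Type*} [TopologicalSpace N] [ChartedSpace H' N] [IsManifold J ((⊤ : ℕ∞) : WithTop ℕ∞) N]
    (f : M → N) (hf : ContMDiff I J (⊤ : ℕ∞) f)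
    (ω : ∀ y : N, TangentSpace J y →L[ℝ] ℝ)
    (hω : ContMDiff J (J.prod 𝓘(ℝ, E' →L[ℝ] ℝ)) (⊤ : ℕ∞)
      (fun y : N =>
        (Bundle.TotalSpace.mk y (ω y) :
          Bundle.TotalSpace (E' →L[ℝ] ℝ)
            (fun y : N => TangentSpace J y →SL[RingHom.id ℝ]
              Bundle.Trivial N ℝ y)))) :
    ContMDiff I (I.prod 𝓘(ℝ, E →L[ℝ] ℝ)) (⊤ : ℕ∞)
      (fun x : M =>
        (Bundle.TotalSpace.mk x ((ω (f x)).comp (mfderiv I J f x)) :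
          Bundle.TotalSpace (E →L[ℝ] ℝ)
            (fun x : M => TangentSpace I x →SL[RingHom.id ℝ]
              Bundle.Trivial M ℝ x))) := by

  intro x₀
  rw [contMDiffAt_hom_bundle]
  refine ⟨contMDiffAt_id, ?_⟩
  -- A : the covector field in coordinates, composed with f
  have hA : ContMDiffAt I 𝓘(ℝ, E' →L[ℝ] ℝ) (⊤ : ℕ∞)
      (fun x => ContinuousLinearMap.inCoordinates E' (TangentSpace J) ℝ (Bundle.Trivial N ℝ)
        (f x₀) (f x) (f x₀) (f x) (ω (f x))) x₀ := by
    have h1 := (contMDiffAt_hom_bundle _).mp (hω.contMDiffAt (x := f x₀))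
    exact h1.2.comp x₀ (hf.contMDiffAt)
  -- B : mfderiv in coordinates
  have hB : ContMDiffAt I 𝓘(ℝ, E →L[ℝ] E') (⊤ : ℕ∞)
      (inTangentCoordinates I J id f (mfderiv I J f) x₀) x₀ :=
    ContMDiffAt.mfderiv_const (hf.contMDiffAt) (by simp)
  refine (hA.clm_comp hB).congr_of_eventuallyEq ?_
  have hmem : ∀ᶠ x in nhds x₀, f x ∈ (trivializationAt E' (TangentSpace J) (f x₀)).baseSet := by
    apply (hf.continuous.continuousAt (x := x₀)).preimage_mem_nhds
    exact (trivializationAt E' (TangentSpace J) (f x₀)).open_baseSet.mem_nhds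
      (FiberBundle.mem_baseSet_trivializationAt' (f x₀))
  filter_upwards [hmem] with x hx
  ext v
  simp only [ContinuousLinearMap.inCoordinates, inTangentCoordinates, Function.comp,
    ContinuousLinearMap.comp_apply, Trivialization.symmL_apply, Trivialization.continuousLinearMapAt_apply,
    Function.id_def]
  congr 1
  have := Trivialization.symmL_continuousLinearMapAt (R := ℝ)
    (trivializationAt E' (TangentSpace J) (f x₀)) hx
    ((mfderiv I J f x) ((trivializationAt E (TangentSpace I) x₀).symmL ℝ x v))
  simp only [Trivialization.symmL_apply, Trivialization.continuousLinearMapAt_apply] at this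
  exact congrArg (ω (f x)) this.symm
end

section
/- Let 𝒞 be a category equipped with an endofunctor T : 𝒞 ⥤ 𝒞 and a natural transformation p : T ⟶ 𝟭 𝒞. Suppose f : A → B is étale, and suppose given a commutative square with top π₁ : X → A, left π₀ : X → C, right f : A → B, and bottom g : C → B, which is a pullback square and whose image under T (top T.map π₁, left T.map π₀, right T.map f, bottom T.map g) is also a pullback square. Then π₀ : X → C is étale. -/
open CategoryTheory Limits

/-- A morphism `f : A ⟶ B` is étale (with respect to an endofunctor `T` and a natural
transformation `p : T ⟶ 𝟭 C`) when its `p`-naturality square is a pullback. -/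
def IsEtale {C : Type*} [Category C] (T : C ⥤ C) (p : T ⟶ 𝟭 C)
    {A B : C} (f : A ⟶ B) : Prop :=
  IsPullback (T.map f) (p.app A) (p.app B) f

/-- The pullback of an étale map along any map, provided the pullback square is
preserved by `T`, is again étale. -/
theorem stmt6 {C : Type*} [Category C] (T : C ⥤ C) (p : T ⟶ 𝟭 C)
    {A B D X : C} (f : A ⟶ B) (g : D ⟶ B) (π₀ : X ⟶ D) (π₁ : X ⟶ A)
    (hf : IsEtale T p f)
    (hsq : IsPullback π₁ π₀ f g)
    (hTsq : IsPullback (T.map π₁) (T.map π₀) (T.map f) (T.map g)) :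
    IsEtale T p π₀ := by
  unfold IsEtale at hf ⊢
  have big := hTsq.flip.paste_vert hf
  rw [p.naturality π₁, p.naturality g] at big
  exact big.of_bot (p.naturality π₀) hsq.flip
end
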